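/- Let $M$ be a normal $d$-pseudomanifold and let $N$ be a $(d-1)$-dimensional induced subcomplex of $M$ which is a normal $(d-1)$-pseudomanifold. Then the simplicial complement $C(N,M)$ has at most two connected components. -/

import Mathlib

open Finset

noncomputable section

attribute [local instance] Classical.propDecidable

variable {V : Type} [DecidableEq V]

/-- A (finite abstract) simplicial complex: a finite family of nonempty finite sets (faces)
closed under taking nonempty subsets. -/
def IsComplex (K : Finset (Finset V)) : Prop :=
  (∀ s ∈ K, s.Nonempty) ∧ ∀ s ∈ K, ∀ t ⊆ s, t.Nonempty → t ∈ K

/-- The vertex set of a complex: the union of its faces. -/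
def vertexSet (K : Finset (Finset V)) : Finset V := K.sup id

/-- A facet is a maximal face. -/
def IsFacet (K : Finset (Finset V)) (s : Finset V) : Prop :=
  s ∈ K ∧ ∀ t ∈ K, s ⊆ t → s = t

/-- A complex is pure of dimension `d` if it is nonempty and every facet has `d + 1` vertices. -/
def IsPure (K : Finset (Finset V)) (d : ℕ) : Prop :=
  K.Nonempty ∧ ∀ s, IsFacet K s → s.card = d + 1

/-- The edge graph (1-skeleton) of a complex. -/
def edgeGraph (K : Finset (Finset V)) : SimpleGraph V where
  Adj x y := x ≠ y ∧ ({x, y} : Finset V) ∈ K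
  symm := by
    constructor
    intro x y h
    refine ⟨h.1.symm, ?_⟩
    rw [Finset.pair_comm]
    exact h.2
  loopless := by
    constructor
    intro x h
    exact h.1 rfl

/-- A complex is connected if it has a vertex and any two of its vertices are joined by a
path in its edge graph. -/
def CConnected (K : Finset (Finset V)) : Prop :=
  (vertexSet K).Nonempty ∧
    ∀ u ∈ vertexSet K, ∀ v ∈ vertexSet K, (edgeGraph K).Reachable u v

/-- The link of a face `α`: all faces `β` disjoint from `α` with `α ∪ β` a face. -/
def link (K : Finset (Finset V)) (α : Finset V) : Finset (Finset V) :=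
  K.filter fun β => Disjoint α β ∧ α ∪ β ∈ K

/-- The number of edges (1-dimensional faces) of a complex. -/
def edgeCount (K : Finset (Finset V)) : ℕ := (K.filter fun s => s.card = 2).card

/-- A weak pseudomanifold of dimension `d`: a pure `d`-dimensional complex in which every
`(d-1)`-dimensional face lies in exactly two facets. -/
def IsWeakPM (K : Finset (Finset V)) (d : ℕ) : Prop :=
  IsComplex K ∧ IsPure K d ∧
    ∀ s ∈ K, s.card = d → (K.filter fun t => IsFacet K t ∧ s ⊆ t).card = 2

/-- A normal `d`-pseudomanifold: a connected weak pseudomanifold of dimension `d` in which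
the link of every face of dimension at most `d - 2` is connected. -/
def IsNormalPM (K : Finset (Finset V)) (d : ℕ) : Prop :=
  IsWeakPM K d ∧ CConnected K ∧
    ∀ s ∈ K, s.card ≤ d - 1 → CConnected (link K s)

/-- The standard `d`-sphere: the complex of all nonempty proper subsets of a `(d+2)`-set. -/
def IsStandardSphere (K : Finset (Finset V)) (d : ℕ) : Prop :=
  ∃ A : Finset V, A.card = d + 2 ∧ K = A.powerset.filter fun s => s.Nonempty ∧ s ≠ A

/-- `StarringOf X Y` : `Y` is obtained from `X` by starring a new vertex `v` in a facet
`σ` of `X`, i.e. by replacing the facet `σ` with the cone with apex `v` over its boundary. -/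
def StarringOf (X Y : Finset (Finset V)) : Prop :=
  ∃ (σ : Finset V) (v : V), IsFacet X σ ∧ v ∉ vertexSet X ∧
    Y = X.erase σ ∪ (σ.powerset.filter fun τ => τ ≠ σ).image fun τ => insert v τ

/-- A stacked `d`-sphere: a complex obtained from the standard `d`-sphere by a finite
sequence of starrings. -/
def IsStackedSphere (K : Finset (Finset V)) (d : ℕ) : Prop :=
  ∃ S : Finset (Finset V), IsStandardSphere S d ∧ Relation.ReflTransGen StarringOf S K

/-- The induced subcomplex on a set `U` of vertices. -/
def induced (K : Finset (Finset V)) (U : Finset V) : Finset (Finset V) :=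
  K.filter fun s => s ⊆ U

/-- The simplicial complement of the induced subcomplex on `U`: the induced subcomplex on
the complementary set of vertices. -/
def simpComplement (K : Finset (Finset V)) (U : Finset V) : Finset (Finset V) :=
  induced K (vertexSet K \ U)

/-- The degree of a vertex: the number of vertices of its link. -/
def vertDegree (K : Finset (Finset V)) (v : V) : ℕ := (vertexSet (link K {v})).card

/-- `farApart G x y` : the distance from `x` to `y` in the graph `G` is at least `3`
(where unreachable counts as infinite distance). -/
def farApart (G : SimpleGraph V) (x y : V) : Prop :=
  x ≠ y ∧ ¬ G.Adj x y ∧ ∀ z : V, ¬ (G.Adj x z ∧ G.Adj z y)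

/-- `Admissible X σ₁ σ₂ ψ` : `σ₁, σ₂` are disjoint facets of `X` and `ψ` restricts to a
bijection from `σ₁` onto `σ₂` moving every `x ∈ σ₁` to distance at least 3 from itself. -/
def Admissible (X : Finset (Finset V)) (σ₁ σ₂ : Finset V) (ψ : V → V) : Prop :=
  IsFacet X σ₁ ∧ IsFacet X σ₂ ∧ Disjoint σ₁ σ₂ ∧ Set.BijOn ψ ↑σ₁ ↑σ₂ ∧
    ∀ x ∈ σ₁, farApart (edgeGraph X) x (ψ x)

/-- Elementary handle addition `X^ψ`: remove the two facets `σ₁, σ₂` and identify each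
`x ∈ σ₁` with `ψ x ∈ σ₂`. -/
def handleAdd (X : Finset (Finset V)) (σ₁ σ₂ : Finset V) (ψ : V → V) :
    Finset (Finset V) :=
  ((X.erase σ₁).erase σ₂).image fun s => s.image fun x => if x ∈ σ₁ then ψ x else x

/-- Isomorphism of simplicial complexes: an injection on vertices carrying the faces of one
complex exactly onto the faces of the other. -/
def CplxIso {W : Type} [DecidableEq W] (K : Finset (Finset V)) (L : Finset (Finset W)) :
    Prop :=
  ∃ f : V → W, Set.InjOn f ↑(vertexSet K) ∧ L = K.image fun s => s.image f

/-- The connected component of the complex `K` containing the vertex `v` (as a subcomplex). -/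
def componentOf (K : Finset (Finset V)) (v : V) : Finset (Finset V) :=
  K.filter fun s => ∀ x ∈ s, (edgeGraph K).Reachable v x

/-- The edges of `M` having exactly one end in `A`. -/
def crossEdges (M : Finset (Finset V)) (A : Finset V) : Finset (Finset V) :=
  M.filter fun e => e.card = 2 ∧ (e ∩ A).card = 1

/-- The graph whose vertices are the edges of `M` with exactly one end in `A`, two of them
being adjacent when the union of the corresponding edges is a 2-dimensional face of `M`. -/
def crossGraph (M : Finset (Finset V)) (A : Finset V) : SimpleGraph (Finset V) where
  Adj e f := e ≠ f ∧ e ∈ crossEdges M A ∧ f ∈ crossEdges M A ∧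
    e ∪ f ∈ M ∧ (e ∪ f).card = 3
  symm := by
    constructor
    intro e f h
    obtain ⟨h1, h2, h3, h4, h5⟩ := h
    exact ⟨h1.symm, h3, h2, by rwa [Finset.union_comm], by rwa [Finset.union_comm]⟩
  loopless := by
    constructor
    intro e h
    exact h.1 rfl

/-- The class `𝒦(d)`: normal `d`-pseudomanifolds all of whose vertex links are stacked
`(d-1)`-spheres. -/
def InClassK (K : Finset (Finset V)) (d : ℕ) : Prop :=
  IsNormalPM K d ∧ ∀ v ∈ vertexSet K, IsStackedSphere (link K {v}) (d - 1)

/-- The total number of partitions of `n`. -/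
def numPartitions (n : ℕ) : ℕ := Fintype.card (Nat.Partition n)

/-- The number of even partitions of `n` (those with an even number of even parts). -/
def numEvenPartitions (n : ℕ) : ℕ :=
  Fintype.card {p : Nat.Partition n // Even (Multiset.card (p.parts.filter fun i => Even i))}

/-- The number of odd partitions of `n` (those with an odd number of even parts). -/
def numOddPartitions (n : ℕ) : ℕ :=
  Fintype.card {p : Nat.Partition n // Odd (Multiset.card (p.parts.filter fun i => Even i))}

/-- The facets of `N^{d+1}_{m+d+1}` : the sets of `d+2` consecutive integers inside
`{1, …, m+d+1}`. -/
def NFacets (d m : ℕ) : Finset (Finset ℕ) :=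
  (Finset.Icc 1 m).image fun k => Finset.Icc k (k + d + 1)

/-- The complex `N^{d+1}_{m+d+1}` on vertex set `{1, …, m+d+1}` whose facets are the sets
of `d+2` consecutive integers. -/
def Ncomplex (d m : ℕ) : Finset (Finset ℕ) :=
  ((NFacets d m).biUnion Finset.powerset).filter fun s => s.Nonempty

/-- The facets of the boundary complex `∂N^{d+1}_{m+d+1}` : the `(d+1)`-element subsets of
`{1, …, m+d+1}` contained in exactly one facet of `N^{d+1}_{m+d+1}`. -/
def boundaryNFacets (d m : ℕ) : Finset (Finset ℕ) :=
  (Finset.Icc 1 (m + d + 1)).powerset.filter fun s =>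
    s.card = d + 1 ∧ ((Finset.Icc 1 m).filter fun k => s ⊆ Finset.Icc k (k + d + 1)).card = 1

/-- The boundary complex `∂N^{d+1}_{m+d+1}`. -/
def boundaryN (d m : ℕ) : Finset (Finset ℕ) :=
  ((boundaryNFacets d m).biUnion Finset.powerset).filter fun s => s.Nonempty


/-!
Write `N = M[A]` and `C = C(N, M)`. A facet `σ` of `N` has `d` vertices, so it is a ridge of `M`
and lies in exactly two facets `σ ∪ {u}`, `σ ∪ {v}` of `M`, with `u, v ∉ A`. If facets
`σ₁ = γ ∪ {s₁}`, `σ₂ = γ ∪ {s₂}` of `N` share a ridge `γ` of `N`, the link of `γ` in `M` is a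
cycle whose only vertices in `A` are `s₁` and `s₂`; going round it from a neighbour of `s₂`
towards `s₁` joins, inside `C`, each vertex completing `σ₂` to a vertex completing `σ₁`. By strong
connectivity of `N`, every vertex completing a facet of `N` is therefore joined in `C` to one of
the two vertices completing a fixed facet `σ₀`. Finally, by strong connectivity of `M`, every
vertex of `C` is joined in `C` to a vertex completing some facet of `N`: follow a chain of
adjacent facets of `M`, keeping a vertex outside `A`, until the chain crosses a ridge inside `A`.
-/

open Relation

section Pure

variable {W : Type} {K : Finset (Finset W)} {s : Finset W} {d : ℕ}

lemma exists_isFacet_superset (hs : s ∈ K) : ∃ τ, IsFacet K τ ∧ s ⊆ τ := by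
  obtain ⟨τ, hsτ, hτ⟩ := K.exists_le_maximal hs
  exact ⟨τ, ⟨hτ.prop, fun t ht hτt => le_antisymm hτt (hτ.2 ht hτt)⟩, hsτ⟩

lemma IsPure.exists_isFacet (hK : IsPure K d) : ∃ σ, IsFacet K σ := by
  obtain ⟨s, hs⟩ := hK.1
  obtain ⟨σ, hσ, -⟩ := exists_isFacet_superset hs
  exact ⟨σ, hσ⟩

lemma IsPure.card_le (hK : IsPure K d) (hs : s ∈ K) : s.card ≤ d + 1 := by
  obtain ⟨τ, hτ, hsτ⟩ := exists_isFacet_superset hs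
  exact (card_le_card hsτ).trans (hK.2 τ hτ).le

lemma IsPure.isFacet_iff (hK : IsPure K d) (hs : s ∈ K) : IsFacet K s ↔ s.card = d + 1 := by
  refine ⟨hK.2 s, fun hcard => ?_⟩
  obtain ⟨τ, hτ, hsτ⟩ := exists_isFacet_superset hs
  rwa [eq_of_subset_of_card_le hsτ (by rw [hK.2 τ hτ, hcard])]

end Pure

section Complex

variable {K L : Finset (Finset V)} {α s t : Finset V} {x y : V} {d : ℕ}

lemma mem_vertexSet : x ∈ vertexSet K ↔ ∃ s ∈ K, x ∈ s := by
  simp [vertexSet]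

lemma subset_vertexSet (hs : s ∈ K) : s ⊆ vertexSet K :=
  fun _ hx => mem_vertexSet.2 ⟨s, hs, hx⟩

lemma mem_induced {U : Finset V} : s ∈ induced K U ↔ s ∈ K ∧ s ⊆ U := mem_filter

lemma IsComplex.singleton_mem (hK : IsComplex K) (hx : x ∈ vertexSet K) : {x} ∈ K := by
  obtain ⟨s, hs, hxs⟩ := mem_vertexSet.1 hx
  exact hK.2 _ hs _ (singleton_subset_iff.2 hxs) (singleton_nonempty x)

lemma IsFacet.card_inter_lt (hs : IsFacet K s) (ht : IsFacet K t) (hst : s ≠ t) :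
    (s ∩ t).card < s.card :=
  card_lt_card <| ssubset_of_subset_of_ne inter_subset_left
    fun h => hst (hs.2 t ht.1 (inter_eq_left.1 h))

lemma exists_forall_isFacet_insert (hK : IsPure K d) (hα : α.card = d)
    (h2 : #{t ∈ K | IsFacet K t ∧ α ⊆ t} = 2) :
    ∃ u v, ∀ x, IsFacet K (insert x α) → x = u ∨ x = v := by
  obtain ⟨τ₁, τ₂, -, hτ⟩ := card_eq_two.1 h2
  have hins : ∀ τ ∈ ({τ₁, τ₂} : Finset (Finset V)), ∃ u ∉ α, insert u α = τ := by
    intro τ hτ'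
    rw [← hτ, mem_filter] at hτ'
    exact exists_eq_insert_iff.2 ⟨hτ'.2.2, by rw [hK.2 τ hτ'.2.1, hα]⟩
  obtain ⟨u, -, rfl⟩ := hins τ₁ (by simp)
  obtain ⟨v, -, rfl⟩ := hins τ₂ (by simp)
  refine ⟨u, v, fun x hx => ?_⟩
  have hxα : x ∉ α := fun h => by
    have := hK.2 _ hx
    rw [insert_eq_of_mem h] at this
    omega
  have : insert x α ∈ ({insert u α, insert v α} : Finset (Finset V)) :=
    hτ ▸ mem_filter.2 ⟨hx.1, hx, subset_insert x α⟩
  simpa [insert_inj hxα] using this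

lemma edgeGraph_mono (h : K ⊆ L) : edgeGraph K ≤ edgeGraph L :=
  fun _ _ hxy => ⟨hxy.1, h hxy.2⟩

lemma adj_simpComplement_iff {U : Finset V} :
    (edgeGraph (simpComplement K U)).Adj x y ↔ (edgeGraph K).Adj x y ∧ x ∉ U ∧ y ∉ U := by
  simp only [edgeGraph, simpComplement, induced, mem_filter, insert_subset_iff,
    singleton_subset_iff, mem_sdiff]
  constructor
  · rintro ⟨hxy, hK, ⟨-, hx⟩, -, hy⟩
    exact ⟨⟨hxy, hK⟩, hx, hy⟩
  · rintro ⟨⟨hxy, hK⟩, hx, hy⟩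
    exact ⟨hxy, hK, ⟨subset_vertexSet hK (by simp), hx⟩, subset_vertexSet hK (by simp), hy⟩

lemma IsComplex.reachable_simpComplement (hK : IsComplex K) {U : Finset V} (hs : s ∈ K)
    (hx : x ∈ s) (hy : y ∈ s) (hxU : x ∉ U) (hyU : y ∉ U) :
    (edgeGraph (simpComplement K U)).Reachable x y := by
  rcases eq_or_ne x y with rfl | hxy
  · exact .refl x
  have hxyK : {x, y} ∈ K :=
    hK.2 _ hs _ (insert_subset hx (singleton_subset_iff.2 hy)) (insert_nonempty _ _)
  exact (adj_simpComplement_iff.2 ⟨⟨hxy, hxyK⟩, hxU, hyU⟩).reachable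

end Complex

section Graph

variable {W : Type*} {G H : SimpleGraph W} {a b : W}

lemma SimpleGraph.Reachable.mem_of_adj_closed {U : Set W} (h : G.Reachable a b) (ha : a ∈ U)
    (hU : ∀ x y, G.Adj x y → x ∈ U → y ∈ U) : b ∈ U := by
  by_contra hb
  obtain ⟨p⟩ := h
  obtain ⟨e, -, he₁, he₂⟩ := p.exists_boundary_dart U ha hb
  exact he₂ (hU _ _ e.adj he₁)

lemma SimpleGraph.Reachable.exists_boundary_adj {S : Set W}
    (hGH : ∀ x y, G.Adj x y → x ∉ S → y ∉ S → H.Adj x y) (h : G.Reachable a b) (ha : a ∉ S)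
    (hb : b ∈ S) : ∃ y c, H.Reachable a y ∧ y ∉ S ∧ G.Adj y c ∧ c ∈ S := by
  by_contra! hno
  refine (h.mem_of_adj_closed (U := {z | z ∉ S ∧ H.Reachable a z}) ⟨ha, .refl a⟩ ?_).1 hb
  rintro x y hxy ⟨hx, hax⟩
  have hy : y ∉ S := fun hy => hno x y hax hx hxy hy
  exact ⟨hy, hax.trans (hGH x y hxy hx hy).reachable⟩

end Graph

section Link

variable {K : Finset (Finset V)} {α β s : Finset V} {x : V} {d : ℕ}

lemma mem_link : β ∈ link K α ↔ β ∈ K ∧ Disjoint α β ∧ α ∪ β ∈ K := mem_filter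

lemma link_subset : link K α ⊆ K := filter_subset _ _

lemma isComplex_link (hK : IsComplex K) (α : Finset V) : IsComplex (link K α) := by
  refine ⟨fun s hs => hK.1 s (mem_link.1 hs).1, fun s hs t hts ht => ?_⟩
  obtain ⟨hsK, hαs, hαsK⟩ := mem_link.1 hs
  exact mem_link.2 ⟨hK.2 s hsK t hts ht, hαs.mono_right hts,
    hK.2 _ hαsK _ (union_subset_union_right hts) (ht.mono subset_union_right)⟩

lemma isFacet_link_iff (hK : IsComplex K) :
    IsFacet (link K α) β ↔ IsFacet K (α ∪ β) ∧ Disjoint α β ∧ β.Nonempty := by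
  constructor
  · intro hβ
    obtain ⟨hβK, hαβ, hαβK⟩ := mem_link.1 hβ.1
    refine ⟨⟨hαβK, fun t ht hsub => ?_⟩, hαβ, hK.1 β hβK⟩
    have hαt : α ⊆ t := subset_union_left.trans hsub
    have hβt : β ⊆ t \ α := subset_sdiff.2 ⟨subset_union_right.trans hsub, hαβ.symm⟩
    have htα : t \ α ∈ link K α := mem_link.2 ⟨hK.2 t ht _ sdiff_subset ((hK.1 β hβK).mono hβt),
      disjoint_sdiff, by rwa [union_sdiff_of_subset hαt]⟩
    rw [hβ.2 _ htα hβt, union_sdiff_of_subset hαt]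
  · rintro ⟨hf, hαβ, hβ⟩
    refine ⟨mem_link.2 ⟨hK.2 _ hf.1 _ subset_union_right hβ, hαβ, hf.1⟩, fun t ht hβt => ?_⟩
    obtain ⟨-, hαt, hαtK⟩ := mem_link.1 ht
    have := hf.2 _ hαtK (union_subset_union_right hβt)
    rw [← union_sdiff_cancel_left hαβ, this, union_sdiff_cancel_left hαt]

lemma link_link (hK : IsComplex K) (hαβ : Disjoint α β) :
    link (link K α) β = link K (α ∪ β) := by
  ext γ
  simp only [mem_link, disjoint_union_left, disjoint_union_right, union_assoc]
  constructor
  · rintro ⟨⟨hγ, hαγ, -⟩, hβγ, -, -, hK'⟩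
    exact ⟨hγ, ⟨hαγ, hβγ⟩, hK'⟩
  · rintro ⟨hγ, ⟨hαγ, hβγ⟩, hK'⟩
    have hγne := hK.1 γ hγ
    exact ⟨⟨hγ, hαγ, hK.2 _ hK' _ (union_subset_union_right subset_union_right)
        (hγne.mono subset_union_right)⟩, hβγ,
      hK.2 _ hK' _ subset_union_right (hγne.mono subset_union_right), ⟨hαβ, hαγ⟩, hK'⟩

lemma mem_vertexSet_link (hK : IsComplex K) :
    x ∈ vertexSet (link K α) ↔ x ∉ α ∧ insert x α ∈ K := by
  rw [← union_singleton]
  constructor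
  · intro hx
    obtain ⟨-, hαx, hαxK⟩ := mem_link.1 ((isComplex_link hK α).singleton_mem hx)
    exact ⟨disjoint_singleton_right.1 hαx, hαxK⟩
  · rintro ⟨hxα, hαxK⟩
    refine subset_vertexSet (mem_link.2 ⟨?_, disjoint_singleton_right.2 hxα, hαxK⟩)
      (mem_singleton_self x)
    exact hK.2 _ hαxK _ subset_union_right (singleton_nonempty x)

lemma isPure_link (hK : IsComplex K) (hp : IsPure K d) (hα : α ∈ K) (hcard : α.card ≤ d) :
    IsPure (link K α) (d - α.card) := by
  obtain ⟨τ, hτ, hατ⟩ := exists_isFacet_superset hα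
  have hne : (τ \ α).Nonempty := by
    rw [← card_pos, card_sdiff_of_subset hατ, hp.2 τ hτ]
    omega
  refine ⟨⟨τ \ α, ((isFacet_link_iff hK).2 ⟨?_, disjoint_sdiff, hne⟩).1⟩, fun β hβ => ?_⟩
  · rwa [union_sdiff_of_subset hατ]
  · obtain ⟨hf, hαβ, -⟩ := (isFacet_link_iff hK).1 hβ
    have := hp.2 _ hf
    rw [card_union_of_disjoint hαβ] at this
    omega

lemma card_isFacet_link_superset (hK : IsComplex K) (hs : s ∈ link K α) :
    #{t ∈ link K α | IsFacet (link K α) t ∧ s ⊆ t} = #{t ∈ K | IsFacet K t ∧ α ∪ s ⊆ t} := by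
  obtain ⟨hsK, hαs, -⟩ := mem_link.1 hs
  refine card_bij' (fun t _ => α ∪ t) (fun τ _ => τ \ α) (fun t ht => ?_) (fun τ hτ => ?_)
    (fun t ht => ?_) (fun τ hτ => ?_) <;> rw [mem_filter] at *
  · obtain ⟨hf, -, -⟩ := (isFacet_link_iff hK).1 ht.2.1
    exact ⟨hf.1, hf, union_subset_union_right ht.2.2⟩
  · have hατ : α ⊆ τ := subset_union_left.trans hτ.2.2
    have hsτ : s ⊆ τ \ α := subset_sdiff.2 ⟨subset_union_right.trans hτ.2.2, hαs.symm⟩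
    have hf : IsFacet (link K α) (τ \ α) := (isFacet_link_iff hK).2
      ⟨by rw [union_sdiff_of_subset hατ]; exact hτ.2.1, disjoint_sdiff, (hK.1 s hsK).mono hsτ⟩
    exact ⟨hf.1, hf, hsτ⟩
  · exact union_sdiff_cancel_left (mem_link.1 ht.1).2.1
  · exact union_sdiff_of_subset (subset_union_left.trans hτ.2.2)

lemma cconnected_link_link (hK : IsComplex K)
    (hl : ∀ s ∈ K, s.card ≤ d - 1 → CConnected (link K s)) (hs : s ∈ link K α)
    (hcard : s.card ≤ d - α.card - 1) : CConnected (link (link K α) s) := by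
  obtain ⟨hsK, hαs, hαsK⟩ := mem_link.1 hs
  have := card_pos.2 (hK.1 s hsK)
  rw [link_link hK hαs]
  exact hl _ hαsK (by rw [card_union_of_disjoint hαs]; omega)

lemma isNormalPM_link (hK : IsNormalPM K d) (hα : α ∈ K) (hcard : α.card ≤ d - 1) :
    IsNormalPM (link K α) (d - α.card) := by
  obtain ⟨⟨hc, hp, hr⟩, -, hl⟩ := hK
  refine ⟨⟨isComplex_link hc α, isPure_link hc hp hα (by omega), fun s hs hsc => ?_⟩,
    hl α hα hcard, fun s hs hsc => cconnected_link_link hc hl hs hsc⟩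
  obtain ⟨-, hαs, hαsK⟩ := mem_link.1 hs
  rw [card_isFacet_link_superset hc hs]
  exact hr _ hαsK (by rw [card_union_of_disjoint hαs]; omega)

end Link

section StrongConnectivity

variable {K : Finset (Finset V)} {σ σ' : Finset V} {e : ℕ}

-- `τ ∩ τ' ∈ K` makes the shared face nonempty, so for `e = 0` no two facets are adjacent.
def AdjFacets (K : Finset (Finset V)) (e : ℕ) (τ τ' : Finset V) : Prop :=
  IsFacet K τ ∧ IsFacet K τ' ∧ τ ∩ τ' ∈ K ∧ (τ ∩ τ').card = e

lemma CConnected.reflTransGen_of_forall_mem {R : Finset V → Finset V → Prop}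
    (hc : CConnected K) (hK : IsComplex K)
    (hR : ∀ x τ τ', IsFacet K τ → IsFacet K τ' → x ∈ τ → x ∈ τ' → ReflTransGen R τ τ')
    (hσ : IsFacet K σ) (hσ' : IsFacet K σ') : ReflTransGen R σ σ' := by
  obtain ⟨p, hp⟩ := hK.1 σ hσ.1
  obtain ⟨q, hq⟩ := hK.1 σ' hσ'.1
  refine (hc.2 p (subset_vertexSet hσ.1 hp) q (subset_vertexSet hσ'.1 hq)).mem_of_adj_closed
    (U := {z | ∀ τ, IsFacet K τ → z ∈ τ → ReflTransGen R σ τ})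
    (fun τ hτ hpτ => hR p σ τ hσ hτ hp hpτ) ?_ σ' hσ' hq
  intro z y hzy hz τ hτ hyτ
  obtain ⟨ρ, hρ, hzyρ⟩ := exists_isFacet_superset hzy.2
  exact (hz ρ hρ (hzyρ (mem_insert_self z _))).trans (hR y ρ τ hρ hτ (hzyρ (by simp)) hyτ)

lemma isFacet_link_erase {τ : Finset V} {x : V} (hK : IsComplex K) (hτ : IsFacet K τ)
    (hxτ : x ∈ τ) (hne : (τ.erase x).Nonempty) : IsFacet (link K {x}) (τ.erase x) := by
  refine (isFacet_link_iff hK).2 ⟨?_, disjoint_singleton_left.2 (notMem_erase x τ), hne⟩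
  rwa [← insert_eq, insert_erase hxτ]

lemma AdjFacets.insert_of_link {a b : Finset V} {x : V} (hK : IsComplex K)
    (h : AdjFacets (link K {x}) e a b) : AdjFacets K (e + 1) (insert x a) (insert x b) := by
  obtain ⟨ha, hb, hab, habc⟩ := h
  obtain ⟨ha', hxa, -⟩ := (isFacet_link_iff hK).1 ha
  obtain ⟨hb', -, -⟩ := (isFacet_link_iff hK).1 hb
  have hxab : x ∉ a ∩ b := fun h => disjoint_singleton_left.1 hxa (mem_inter.1 h).1
  refine ⟨by rwa [insert_eq], by rwa [insert_eq], ?_, ?_⟩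
  · rw [← insert_inter_distrib, insert_eq]
    exact (mem_link.1 hab).2.2
  · rw [← insert_inter_distrib, card_insert_of_notMem hxab, habc]

theorem reflTransGen_adjFacets (hK : IsComplex K) (hp : IsPure K e) (hc : CConnected K)
    (hl : ∀ s ∈ K, s.card ≤ e - 1 → CConnected (link K s)) (hσ : IsFacet K σ)
    (hσ' : IsFacet K σ') : ReflTransGen (AdjFacets K e) σ σ' := by
  induction e generalizing K σ σ' with
  | zero =>
    refine hc.reflTransGen_of_forall_mem hK (fun x τ τ' hτ hτ' hxτ hxτ' => ?_) hσ hσ'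
    obtain ⟨a, rfl⟩ := card_eq_one.1 (hp.2 τ hτ)
    obtain ⟨b, rfl⟩ := card_eq_one.1 (hp.2 τ' hτ')
    obtain rfl := mem_singleton.1 hxτ
    obtain rfl := mem_singleton.1 hxτ'
    exact .refl
  | succ e ih =>
    refine hc.reflTransGen_of_forall_mem hK (fun x τ τ' hτ hτ' hxτ hxτ' => ?_) hσ hσ'
    rcases eq_or_ne τ τ' with rfl | hττ'
    · exact .refl
    have hx : x ∈ τ ∩ τ' := mem_inter.2 ⟨hxτ, hxτ'⟩
    rcases Nat.eq_zero_or_pos e with rfl | he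
    · -- two distinct edges through `x` meet exactly in `x`
      refine .single ⟨hτ, hτ', hK.2 _ hτ.1 _ inter_subset_left ⟨x, hx⟩, ?_⟩
      have := hτ.card_inter_lt hτ' hττ'
      have := card_pos.2 ⟨x, hx⟩
      rw [hp.2 τ hτ] at *
      omega
    have hxK : {x} ∈ K := hK.2 _ hτ.1 _ (singleton_subset_iff.2 hxτ) (singleton_nonempty x)
    have hlink : ∀ τ, IsFacet K τ → x ∈ τ → IsFacet (link K {x}) (τ.erase x) :=
      fun τ hτ hxτ => isFacet_link_erase hK hτ hxτ (by
        rw [← card_pos, card_erase_of_mem hxτ, hp.2 τ hτ]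
        omega)
    -- a chain of facets in the link of `x` lifts to a chain of facets through `x`
    have hchain := ih (isComplex_link hK {x}) (isPure_link hK hp hxK (by simp))
      (hl {x} hxK (by rw [card_singleton]; omega))
      (fun s hs hsc => cconnected_link_link hK hl hs hsc) (hlink τ hτ hxτ) (hlink τ' hτ' hxτ')
    simpa only [Function.onFun, insert_erase hxτ, insert_erase hxτ'] using
      ReflTransGen.lift (insert x) (fun _ _ => AdjFacets.insert_of_link hK) _ _ hchain

lemma AdjFacets.exists_eq_insert {σ₁ σ₂ : Finset V} (hK : IsPure K e) (h : AdjFacets K e σ₁ σ₂) :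
    ∃ s s', s ≠ s' ∧ s ∉ σ₁ ∩ σ₂ ∧ s' ∉ σ₁ ∩ σ₂ ∧
      insert s (σ₁ ∩ σ₂) = σ₁ ∧ insert s' (σ₁ ∩ σ₂) = σ₂ := by
  obtain ⟨h₁, h₂, -, hcard⟩ := h
  obtain ⟨s, hs, hs₁⟩ := exists_eq_insert_iff.2 ⟨inter_subset_left, by rw [hcard, hK.2 _ h₁]⟩
  obtain ⟨s', hs', hs'₂⟩ := exists_eq_insert_iff.2 ⟨inter_subset_right, by rw [hcard, hK.2 _ h₂]⟩
  refine ⟨s, s', fun hss' => ?_, hs, hs', hs₁, hs'₂⟩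
  rw [← hss', hs₁] at hs'₂
  rw [← hs'₂, inter_self, hK.2 _ h₁] at hcard
  omega

end StrongConnectivity

section Cycle

variable {L : Finset (Finset V)} {s p q z : V}

lemma IsWeakPM.card_edges_mem (hL : IsWeakPM L 1) (hz : z ∈ vertexSet L) :
    #{e ∈ L | e.card = 2 ∧ z ∈ e} = 2 := by
  obtain ⟨hc, hp, hr⟩ := hL
  calc #{e ∈ L | e.card = 2 ∧ z ∈ e} = #{t ∈ L | IsFacet L t ∧ {z} ⊆ t} :=
        congrArg card (filter_congr fun e he => by rw [hp.isFacet_iff he, singleton_subset_iff])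
    _ = 2 := hr {z} (hc.singleton_mem hz) (card_singleton z)

/-- Handshake count over the edges inside `insert s T`, for `T` closed except towards `s`. -/
lemma IsWeakPM.even_card_edges_between (hL : IsWeakPM L 1) {T : Finset V}
    (hT : T ⊆ vertexSet L) (hsT : s ∉ T)
    (hclosed : ∀ e ∈ L, e.card = 2 → ∀ t ∈ T, t ∈ e → e ⊆ insert s T) :
    Even #{e ∈ L | e.card = 2 ∧ e ⊆ insert s T ∧ s ∈ e} := by
  set E := {e ∈ L | e.card = 2 ∧ e ⊆ insert s T}
  have hdeg : ∀ t ∈ T, #{e ∈ E | t ∈ e} = 2 := by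
    intro t ht
    rw [← hL.card_edges_mem (hT ht), filter_filter]
    exact congrArg card (filter_congr fun e he => ⟨fun h => ⟨h.1.1, h.2⟩,
      fun h => ⟨⟨h.1, hclosed e he h.1 t ht h.2⟩, h.2⟩⟩)
  have hsplit : ∀ e ∈ E, #(T ∩ e) + (if s ∈ e then 1 else 0) = 2 := by
    intro e he
    obtain ⟨-, hec, heT⟩ := mem_filter.1 he
    split_ifs with hse
    · have : T ∩ e = e.erase s := by
        ext z
        simp only [mem_inter, mem_erase]
        exact ⟨fun h => ⟨fun hzs => hsT (hzs ▸ h.1), h.2⟩,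
          fun h => ⟨(mem_insert.1 (heT h.2)).resolve_left h.1, h.2⟩⟩
      rw [this, card_erase_of_mem hse, hec]
    · rw [inter_eq_right.2 fun z hze => (mem_insert.1 (heT hze)).resolve_left
        (fun h => hse (h ▸ hze)), hec]
  have hcount : #T * 2 + #{e ∈ E | s ∈ e} = #E * 2 := by
    rw [← sum_card_inter hdeg, card_filter, ← sum_add_distrib, sum_congr rfl hsplit, sum_const,
      smul_eq_mul]
  have hEs : {e ∈ L | e.card = 2 ∧ e ⊆ insert s T ∧ s ∈ e} = {e ∈ E | s ∈ e} := by
    simp only [E, filter_filter, and_assoc]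
  rw [hEs]
  exact ⟨#E - #T, by omega⟩

theorem IsNormalPM.reachable_simpComplement_singleton (hL : IsNormalPM L 1)
    (hs : s ∈ vertexSet L) (hp : p ∈ vertexSet L) (hq : q ∈ vertexSet L) (hps : p ≠ s)
    (hqs : q ≠ s) : (edgeGraph (simpComplement L {s})).Reachable p q := by
  obtain ⟨hw, hconn, -⟩ := hL
  set T := {z ∈ vertexSet L | z ≠ s ∧ (edgeGraph (simpComplement L {s})).Reachable p z}
  have hpT : p ∈ T := mem_filter.2 ⟨hp, hps, .refl p⟩
  have hclosed : ∀ t ∈ T, ∀ z, (edgeGraph L).Adj t z → z ≠ s → z ∈ T := by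
    intro t ht z htz hzs
    obtain ⟨-, hts, hpt⟩ := mem_filter.1 ht
    refine mem_filter.2 ⟨subset_vertexSet htz.2 (by simp), hzs, hpt.trans ?_⟩
    exact (adj_simpComplement_iff.2 ⟨htz, by simpa using hts, by simpa using hzs⟩).reachable
  have hedge : ∀ e ∈ L, e.card = 2 → ∀ t ∈ T, t ∈ e → e ⊆ insert s T := by
    intro e he hec t ht hte z hze
    rcases eq_or_ne z t with rfl | hzt
    · exact mem_insert_of_mem ht
    rcases eq_or_ne z s with hzs | hzs
    · exact mem_insert.2 (.inl hzs)
    refine mem_insert_of_mem (hclosed t ht z ⟨hzt.symm, ?_⟩ hzs)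
    rwa [(eq_of_subset_of_card_le (insert_subset hte (singleton_subset_iff.2 hze))
      (by rw [hec, card_pair hzt.symm])).symm] at he
  set Es := {e ∈ L | e.card = 2 ∧ e ⊆ insert s T ∧ s ∈ e}
  have hsub : Es ⊆ {e ∈ L | e.card = 2 ∧ s ∈ e} := fun e he => by
    simp only [Es, mem_filter] at he ⊢
    exact ⟨he.1, he.2.1, he.2.2.2⟩
  have hEs : Even #Es :=
    hw.even_card_edges_between (filter_subset _ _) (fun h => (mem_filter.1 h).2.1 rfl) hedge
  obtain ⟨r, hr⟩ := hEs
  have hle := (card_le_card hsub).trans_eq (hw.card_edges_mem hs)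
  suffices q ∈ T from (mem_filter.1 this).2.2
  rcases (by omega : #Es = 0 ∨ #Es = 2) with h0 | h2
  · -- no edge joins `s` to `T`, so `T` is closed
    refine (hconn.2 p hp q hq).mem_of_adj_closed (U := ↑T) hpT fun t z htz ht => ?_
    refine hclosed t ht z htz fun hzs => ?_
    have : {t, z} ∈ Es := mem_filter.2 ⟨htz.2, card_pair htz.1,
      hedge _ htz.2 (card_pair htz.1) t ht (by simp), by simp [hzs]⟩
    simp [card_eq_zero.1 h0] at this
  · -- both edges at `s` lead into `T`, so `insert s T` is closed
    have hall : Es = {e ∈ L | e.card = 2 ∧ s ∈ e} :=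
      eq_of_subset_of_card_le hsub (by rw [h2, hw.card_edges_mem hs])
    have hqs' := (hconn.2 p hp q hq).mem_of_adj_closed (U := ↑(insert s T))
      (mem_insert_of_mem hpT) fun t z htz ht => ?_
    · exact (mem_insert.1 hqs').resolve_left hqs
    rcases mem_insert.1 ht with hts | ht
    · have : {s, z} ∈ Es :=
        hall ▸ mem_filter.2 ⟨hts ▸ htz.2, card_pair (hts ▸ htz.1), by simp⟩
      exact (mem_filter.1 this).2.2.1 (by simp)
    · rcases eq_or_ne z s with hzs | hzs
      · exact mem_insert.2 (.inl hzs)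
      · exact mem_insert_of_mem (hclosed t ht z htz hzs)

end Cycle

section Complement

variable {M : Finset (Finset V)} {A σ σ₀ τ : Finset V} {x : V} {d : ℕ}

lemma card_of_isFacet_induced (hd : 1 ≤ d) (hN : IsPure (induced M A) (d - 1))
    (hσ : IsFacet (induced M A) σ) : σ.card = d := by
  have := hN.2 σ hσ
  omega

lemma notMem_of_isFacet_insert (hd : 1 ≤ d) (hM : IsPure M d)
    (hN : IsPure (induced M A) (d - 1)) (hσ : IsFacet (induced M A) σ)
    (hx : IsFacet M (insert x σ)) : x ∉ A := by
  intro hxA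
  have := hN.card_le (mem_induced.2 ⟨hx.1, insert_subset hxA (mem_induced.1 hσ.1).2⟩)
  have := hM.2 _ hx
  omega

lemma isFacet_insert_of_subset (hd : 1 ≤ d) (hM : IsPure M d)
    (hN : IsPure (induced M A) (d - 1)) (hτ : IsFacet M τ) (hσ : IsFacet (induced M A) σ)
    (hστ : σ ⊆ τ) (hx : x ∈ τ) (hxA : x ∉ A) : IsFacet M (insert x σ) := by
  have hxσ : x ∉ σ := fun h => hxA ((mem_induced.1 hσ.1).2 h)
  rwa [eq_of_subset_of_card_le (insert_subset hx hστ) (by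
    rw [card_insert_of_notMem hxσ, hM.2 τ hτ, card_of_isFacet_induced hd hN hσ])]

lemma eq_or_eq_of_mem_vertexSet_link {γ : Finset V} {s s' a : V} (hM : IsComplex M)
    (hN : IsWeakPM (induced M A) (d - 1)) (hγ : γ ∈ induced M A) (hγc : γ.card = d - 1)
    (hs : IsFacet (induced M A) (insert s γ)) (hs' : IsFacet (induced M A) (insert s' γ))
    (hss' : s ≠ s') (ha : a ∈ vertexSet (link M γ)) (haA : a ∈ A) : a = s ∨ a = s' := by
  obtain ⟨u, v, huv⟩ := exists_forall_isFacet_insert hN.2.1 hγc (hN.2.2 γ hγ hγc)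
  obtain ⟨haγ, haM⟩ := (mem_vertexSet_link hM).1 ha
  have ha' : IsFacet (induced M A) (insert a γ) :=
    (hN.2.1.isFacet_iff (mem_induced.2 ⟨haM, insert_subset haA (mem_induced.1 hγ).2⟩)).2
      (by rw [card_insert_of_notMem haγ, hγc])
  have := huv a ha'
  have := huv s hs
  have := huv s' hs'
  grind

theorem exists_isFacet_insert_reachable_of_ridge (hd : 1 ≤ d) (hM : IsNormalPM M d)
    (hN : IsWeakPM (induced M A) (d - 1)) {γ : Finset V} {s s' : V} (hγ : γ ∈ induced M A)
    (hγc : γ.card = d - 1) (hs : IsFacet (induced M A) (insert s γ))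
    (hs' : IsFacet (induced M A) (insert s' γ)) (hss' : s ≠ s') (hsγ : s ∉ γ) (hs'γ : s' ∉ γ)
    (hx : IsFacet M (insert x (insert s' γ))) :
    ∃ y, IsFacet M (insert y (insert s γ)) ∧ (edgeGraph (simpComplement M A)).Reachable x y := by
  have hMc := hM.1.1
  obtain ⟨hγM, hγA⟩ := mem_induced.1 hγ
  have hL : IsNormalPM (link M γ) 1 := by
    have := isNormalPM_link hM hγM (by omega)
    rwa [show d - γ.card = 1 by omega] at this
  have hxA := notMem_of_isFacet_insert hd hM.1.2.1 hN.2.1 hs' hx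
  have hsA : s ∈ A := (mem_induced.1 hs.1).2 (mem_insert_self s γ)
  have hs'A : s' ∈ A := (mem_induced.1 hs'.1).2 (mem_insert_self s' γ)
  have hxL : x ∈ vertexSet (link M γ) := (mem_vertexSet_link hMc).2 ⟨fun h => hxA (hγA h),
    hMc.2 _ hx.1 _ (insert_subset_insert x (subset_insert s' γ)) (insert_nonempty _ _)⟩
  have hsL := (mem_vertexSet_link hMc).2 ⟨hsγ, (mem_induced.1 hs.1).1⟩
  have hs'L := (mem_vertexSet_link hMc).2 ⟨hs'γ, (mem_induced.1 hs'.1).1⟩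
  -- go round the cycle `link M γ` from `x` towards `s`, avoiding `s'`, until `A` is first met
  have hround := hL.reachable_simpComplement_singleton hs'L hxL hsL
    (fun h => hxA (h ▸ hs'A)) hss'
  obtain ⟨y, a, hxy, hyA, hya, haA⟩ := hround.exists_boundary_adj (S := ↑A)
    (H := edgeGraph (simpComplement M A))
    (fun p q hpq hp hq => adj_simpComplement_iff.2
      ⟨edgeGraph_mono link_subset (adj_simpComplement_iff.1 hpq).1, hp, hq⟩) hxA hsA
  obtain ⟨hya', -, has'⟩ := adj_simpComplement_iff.1 hya
  obtain rfl : a = s := (eq_or_eq_of_mem_vertexSet_link hMc hN hγ hγc hs hs' hss'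
    (subset_vertexSet hya'.2 (by simp)) haA).resolve_right (by simpa using has')
  obtain ⟨-, -, hyaM⟩ := mem_link.1 hya'.2
  have hy : y ∉ insert a γ := fun h => hyA ((mem_induced.1 hs.1).2 h)
  refine ⟨y, (hM.1.2.1.isFacet_iff ?_).2 ?_, hxy⟩
  · rwa [union_insert, union_singleton] at hyaM
  · rw [card_insert_of_notMem hy, card_of_isFacet_induced hd hN.2.1 hs]

theorem exists_isFacet_insert_reachable_of_adjFacets (hd : 1 ≤ d) (hM : IsNormalPM M d)
    (hN : IsWeakPM (induced M A) (d - 1)) {σ₁ σ₂ : Finset V}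
    (h : AdjFacets (induced M A) (d - 1) σ₁ σ₂) (hx : IsFacet M (insert x σ₂)) :
    ∃ y, IsFacet M (insert y σ₁) ∧ (edgeGraph (simpComplement M A)).Reachable x y := by
  obtain ⟨s, s', hss', hsγ, hs'γ, hs, hs'⟩ := h.exists_eq_insert hN.2.1
  obtain ⟨hσ₁, hσ₂, hγ, hγc⟩ := h
  rw [← hs'] at hx hσ₂
  rw [← hs] at hσ₁ ⊢
  exact exists_isFacet_insert_reachable_of_ridge hd hM hN hγ hγc hσ₁ hσ₂ hss' hsγ hs'γ hx

theorem exists_isFacet_insert_reachable_of_isFacet (hd : 1 ≤ d) (hM : IsNormalPM M d)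
    (hN : IsNormalPM (induced M A) (d - 1)) (hσ₀ : IsFacet (induced M A) σ₀)
    (hσ : IsFacet (induced M A) σ) (hx : IsFacet M (insert x σ)) :
    ∃ y, IsFacet M (insert y σ₀) ∧ (edgeGraph (simpComplement M A)).Reachable x y := by
  have hchain := reflTransGen_adjFacets hN.1.1 hN.1.2.1 hN.2.1 hN.2.2 hσ₀ hσ
  clear hσ
  induction hchain generalizing x with
  | refl => exact ⟨x, hx, .refl x⟩
  | tail _ hstep ih =>
    obtain ⟨y, hy, hxy⟩ := exists_isFacet_insert_reachable_of_adjFacets hd hM hN.1 hstep hx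
    obtain ⟨z, hz, hyz⟩ := ih hy
    exact ⟨z, hz, hxy.trans hyz⟩

theorem exists_isFacet_insert_reachable (hd : 1 ≤ d) (hM : IsNormalPM M d)
    (hN : IsPure (induced M A) (d - 1)) {w : V} (hw : w ∈ vertexSet (simpComplement M A)) :
    ∃ σ x, IsFacet (induced M A) σ ∧ IsFacet M (insert x σ) ∧
      (edgeGraph (simpComplement M A)).Reachable w x := by
  obtain ⟨⟨hMc, hMp, -⟩, hMconn, hMl⟩ := hM
  obtain ⟨s, hs, hws⟩ := mem_vertexSet.1 hw
  obtain ⟨hsM, hsA⟩ := mem_induced.1 hs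
  obtain ⟨τ₀, hτ₀, hsτ₀⟩ := exists_isFacet_superset hsM
  obtain ⟨σ₀, hσ₀⟩ := hN.exists_isFacet
  obtain ⟨τ₁, hτ₁, hσ₀τ₁⟩ := exists_isFacet_superset (mem_induced.1 hσ₀.1).1
  by_contra! hno
  -- along a chain of adjacent facets, `w` keeps reaching a vertex outside `A`: passing a ridge
  -- inside `A` would exhibit the reached vertex as completing a facet of `M[A]`
  have key : ∀ τ, ReflTransGen (AdjFacets M d) τ₀ τ →
      ∃ z ∈ τ, z ∉ A ∧ (edgeGraph (simpComplement M A)).Reachable w z := by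
    intro τ hτ
    induction hτ with
    | refl => exact ⟨w, hsτ₀ hws, (mem_sdiff.1 (hsA hws)).2, .refl w⟩
    | @tail τ τ' _ hstep ih =>
      obtain ⟨z, hzτ, hzA, hwz⟩ := ih
      obtain ⟨hτ, hτ', hR, hRc⟩ := hstep
      by_cases hRA : τ ∩ τ' ⊆ A
      · have hRN : IsFacet (induced M A) (τ ∩ τ') :=
          (hN.isFacet_iff (mem_induced.2 ⟨hR, hRA⟩)).2 (by omega)
        exact absurd hwz (hno _ z hRN
          (isFacet_insert_of_subset hd hMp hN hτ hRN inter_subset_left hzτ hzA))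
      · obtain ⟨z', hz'R, hz'A⟩ := not_subset.1 hRA
        exact ⟨z', (mem_inter.1 hz'R).2, hz'A,
          hwz.trans (hMc.reachable_simpComplement hτ.1 hzτ (mem_inter.1 hz'R).1 hzA hz'A)⟩
  obtain ⟨z, hzτ₁, hzA, hwz⟩ := key τ₁ (reflTransGen_adjFacets hMc hMp hMconn hMl hτ₀ hτ₁)
  exact hno σ₀ z hσ₀ (isFacet_insert_of_subset hd hMp hN hτ₁ hσ₀ hσ₀τ₁ hzτ₁ hzA) hwz

end Complement

theorem stmt4_general {V : Type} [DecidableEq V] (d : ℕ) (hd : 1 ≤ d)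
    (M : Finset (Finset V)) (A : Finset V)
    (hM : IsNormalPM M d)
    (hN : IsNormalPM (induced M A) (d - 1)) :
    ∃ u v : V, ∀ w ∈ vertexSet (simpComplement M A),
      (edgeGraph (simpComplement M A)).Reachable w u ∨
      (edgeGraph (simpComplement M A)).Reachable w v := by
  obtain ⟨σ₀, hσ₀⟩ := hN.1.2.1.exists_isFacet
  have hσ₀c := card_of_isFacet_induced hd hN.1.2.1 hσ₀
  obtain ⟨u, v, huv⟩ :=
    exists_forall_isFacet_insert hM.1.2.1 hσ₀c (hM.1.2.2 σ₀ (mem_induced.1 hσ₀.1).1 hσ₀c)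
  refine ⟨u, v, fun w hw => ?_⟩
  obtain ⟨σ, x, hσ, hx, hwx⟩ := exists_isFacet_insert_reachable hd hM hN.1.2.1 hw
  obtain ⟨y, hy, hxy⟩ := exists_isFacet_insert_reachable_of_isFacet hd hM hN hσ₀ hσ hx
  rcases huv y hy with rfl | rfl
  · exact .inl (hwx.trans hxy)
  · exact .inr (hwx.trans hxy)

/-- If `N = M[A]` is a `(d-1)`-dimensional induced subcomplex of the normal
`d`-pseudomanifold `M` which is a normal `(d-1)`-pseudomanifold, then the simplicial
complement `C(N, M)` has at most two connected components. -/
theorem stmt4 {V : Type} [DecidableEq V] (d : ℕ) (hd : 1 ≤ d)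
    (M : Finset (Finset V)) (A : Finset V)
    (hM : IsNormalPM M d) (hA : A ⊆ vertexSet M)
    (hN : IsNormalPM (induced M A) (d - 1)) :
    ∃ u v : V, ∀ w ∈ vertexSet (simpComplement M A),
      (edgeGraph (simpComplement M A)).Reachable w u ∨
      (edgeGraph (simpComplement M A)).Reachable w v :=
  stmt4_general d hd M A hM hN

end
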